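/- Atanassov and Vassiliev's sup-based transformation does not commute with the (min, max, max) intersection: for the neutrosophic sets A with values A(x₁) = (0.8, 0.3, 0.5), A(x₂) = (0.9, 0.2, 0.6) and B with values B(x₁) = (0.2, 0.1, 0.3), B(x₂) = (0.6, 0.2, 0.1) on the two-element universe {x₁, x₂}, one has S_A = 1.8, S_B = 1.1, and the neutrosophic intersection C = A ∧_N B satisfies C(x₁) = (0.2, 0.3, 0.5), C(x₂) = (0.6, 0.2, 0.6) with S_C = 1.5; then the componentwise (min, max, max) intersection of the transformed sets at x₁, namely (min{0.8/1.8, 0.2/1.1}, max{0.3/1.8, 0.1/1.1}, max{0.5/1.8, 0.3/1.1}), is different from the transform of the neutrosophic intersection at x₁, namely (0.2/1.5, 0.3/1.5, 0.5/1.5). -/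
import Mathlib


lemma sup2 (f : Fin 2 → ℝ) :
    Finset.univ.sup' Finset.univ_nonempty f = max (f 0) (f 1) := by
  apply le_antisymm
  · exact Finset.sup'_le _ _ (by intro i _; fin_cases i <;> simp)
  · exact max_le (Finset.le_sup' f (Finset.mem_univ 0)) (Finset.le_sup' f (Finset.mem_univ 1))

/-- Atanassov and Vassiliev's sup-based transformation does not commute with
the (min, max, max) intersection, shown on the concrete neutrosophic sets
A = {x₁(0.8,0.3,0.5), x₂(0.9,0.2,0.6)} and B = {x₁(0.2,0.1,0.3),
x₂(0.6,0.2,0.1)}: S_A = 1.8, S_B = 1.1, C = A ∧_N B has C(x₁) = (0.2,0.3,0.5),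
C(x₂) = (0.6,0.2,0.6), S_C = 1.5, and intersecting the transformed sets at x₁
gives a different result from transforming the intersection at x₁. -/
theorem supTransform_not_commute_with_interN
    (A B C : Fin 2 → ℝ × ℝ × ℝ)
    (hA : A = ![(0.8, 0.3, 0.5), (0.9, 0.2, 0.6)])
    (hB : B = ![(0.2, 0.1, 0.3), (0.6, 0.2, 0.1)])
    (hC : ∀ x, C x = (min (A x).1 (B x).1, max (A x).2.1 (B x).2.1,
        max (A x).2.2 (B x).2.2))
    (SA SB SC : ℝ)
    (hSA : SA = Finset.univ.sup' Finset.univ_nonempty (fun x => (A x).1) +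
        Finset.univ.sup' Finset.univ_nonempty (fun x => (A x).2.1) +
        Finset.univ.sup' Finset.univ_nonempty (fun x => (A x).2.2))
    (hSB : SB = Finset.univ.sup' Finset.univ_nonempty (fun x => (B x).1) +
        Finset.univ.sup' Finset.univ_nonempty (fun x => (B x).2.1) +
        Finset.univ.sup' Finset.univ_nonempty (fun x => (B x).2.2))
    (hSC : SC = Finset.univ.sup' Finset.univ_nonempty (fun x => (C x).1) +
        Finset.univ.sup' Finset.univ_nonempty (fun x => (C x).2.1) +
        Finset.univ.sup' Finset.univ_nonempty (fun x => (C x).2.2)) :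
    SA = 1.8 ∧ SB = 1.1 ∧
    C 0 = (0.2, 0.3, 0.5) ∧ C 1 = (0.6, 0.2, 0.6) ∧ SC = 1.5 ∧
    ((min ((A 0).1 / SA) ((B 0).1 / SB),
      max ((A 0).2.1 / SA) ((B 0).2.1 / SB),
      max ((A 0).2.2 / SA) ((B 0).2.2 / SB)) : ℝ × ℝ × ℝ) ≠
      ((C 0).1 / SC, (C 0).2.1 / SC, (C 0).2.2 / SC) := by
  have hC0 := hC 0
  have hC1 := hC 1
  rw [hA, hB] at hC0 hC1
  simp only [Matrix.cons_val_zero, Matrix.cons_val_one, Matrix.head_cons] at hC0 hC1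
  rw [sup2, sup2, sup2] at hSA hSB hSC
  rw [hA] at hSA
  rw [hB] at hSB
  rw [hC0, hC1] at hSC
  simp only [Matrix.cons_val_zero, Matrix.cons_val_one, Matrix.head_cons] at hSA hSB hSC
  norm_num at hSA hSB hSC
  refine ⟨by rw [hSA]; norm_num, by rw [hSB]; norm_num, by rw [hC0]; norm_num, by rw [hC1]; norm_num, by rw [hSC]; norm_num, ?_⟩
  rw [hA, hB]
  intro h
  have h1 := congrArg Prod.fst h
  simp only [Matrix.cons_val_zero] at h1
  rw [hSA, hSB, hSC, hC0] at h1
  norm_num [min_def] at h1
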